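/- arXiv:2108.12762 — 5 statements merged into one kernel-verified Lean document; each statement's English description precedes it below -/
import Mathlib

section
/- Forward Euler CFL bound for the upwind scheme: let λ_max, Δx, ε > 0 and set Δt = CFL·Δx/λ_max. If CFL ≤ 2ε·λ_max/(Δx + 2ε·λ_max), then for every real λ in the interval [−λ_max/Δx − 1/ε − R, −λ_max/Δx − 1/ε + R] with R = λ_max/Δx (and also for every λ in [−λ_max/Δx − R, −λ_max/Δx + R] ∩ (−∞, 0]), the Forward Euler amplification factor satisfies |1 + Δt·λ| ≤ 1. -/
/-- Forward Euler CFL bound for the upwind scheme: let lmax, Δx, ε > 0,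
0 < CFL ≤ 2ε·lmax/(Δx + 2ε·lmax) and Δt = CFL·Δx/lmax.  Then every real λ in the fast
cluster interval [−lmax/Δx − 1/ε − R, −lmax/Δx − 1/ε + R] with R = lmax/Δx, and every
nonpositive real λ in the slow cluster interval [−lmax/Δx − R, −lmax/Δx + R], satisfies
|1 + Δt·λ| ≤ 1. -/
theorem stmt7 (lmax Δx ε CFL Δt R : ℝ) (hl : 0 < lmax) (hΔx : 0 < Δx) (hε : 0 < ε)
    (hCFL0 : 0 < CFL) (hCFL : CFL ≤ 2 * ε * lmax / (Δx + 2 * ε * lmax))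
    (hΔt : Δt = CFL * Δx / lmax) (hR : R = lmax / Δx) (lam : ℝ)
    (hlam : lam ∈ Set.Icc (-(lmax / Δx) - 1 / ε - R) (-(lmax / Δx) - 1 / ε + R) ∨
      (lam ∈ Set.Icc (-(lmax / Δx) - R) (-(lmax / Δx) + R) ∧ lam ≤ 0)) :
    |1 + Δt * lam| ≤ 1 := by
  have hden : 0 < Δx + 2 * ε * lmax := by positivity
  have hΔt0 : 0 ≤ Δt := by rw [hΔt]; positivity
  -- CFL bound in cleared form: CFL * (Δx + 2*ε*lmax) ≤ 2*ε*lmax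
  have hCFL' : CFL * (Δx + 2 * ε * lmax) ≤ 2 * ε * lmax := by
    exact (le_div_iff₀ hden).mp hCFL
  -- λ is nonpositive in both cases
  have hlam0 : lam ≤ 0 := by
    rcases hlam with ⟨_, h2⟩ | ⟨_, h2⟩
    · have : -(lmax / Δx) - 1 / ε + R = -(1 / ε) := by rw [hR]; ring
      rw [this] at h2
      have : 0 < 1 / ε := by positivity
      linarith
    · exact h2
  -- lower bound on λ in both cases
  have hlb : -(2 * (lmax / Δx) + 1 / ε) ≤ lam := by
    rcases hlam with ⟨h1, _⟩ | ⟨⟨h1, _⟩, _⟩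
    · rw [hR] at h1; linarith
    · rw [hR] at h1
      have : 0 < 1 / ε := by positivity
      linarith
  rw [abs_le]
  constructor
  · -- need -2 ≤ Δt * lam, i.e. Δt * (2*lmax/Δx + 1/ε) ≤ 2
    have key : Δt * (2 * (lmax / Δx) + 1 / ε) ≤ 2 := by
      rw [hΔt]
      have e : CFL * Δx / lmax * (2 * (lmax / Δx) + 1 / ε)
          = 2 * CFL + CFL * Δx / (lmax * ε) := by
        field_simp
      rw [e]
      have h3 : CFL * Δx / (lmax * ε) ≤ 2 - 2 * CFL := by
        rw [div_le_iff₀ (by positivity : (0:ℝ) < lmax * ε)]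
        nlinarith [hCFL']
      linarith
    have : Δt * lam ≥ Δt * (-(2 * (lmax / Δx) + 1 / ε)) :=
      mul_le_mul_of_nonneg_left hlb hΔt0
    nlinarith
  · nlinarith [mul_nonneg hΔt0 (neg_nonneg.mpr hlam0)]
end

section
/- Forward Euler CFL bound for the FORCE scheme: let λ_max, Δx, ε > 0, CFL > 0 and Δt = CFL·Δx/λ_max. If CFL ≤ −Δx/(2ελ_max) + √((Δx/(2ελ_max))² + 1), then Δt·((λ_max/Δx)(1/CFL + CFL) + 1/ε) ≤ 2, i.e., the leftmost point λ = −(λ_max/(2Δx))(1/CFL + CFL) − 1/ε − (λ_max/(2Δx))(1/CFL + CFL) of the FORCE fast cluster satisfies |1 + Δt·λ| ≤ 1. -/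
/-- Forward Euler CFL bound for the FORCE scheme: let lmax, Δx, ε > 0,
CFL > 0 and Δt = CFL·Δx/lmax.  If CFL ≤ −Δx/(2ε·lmax) + √((Δx/(2ε·lmax))² + 1), then
Δt·((lmax/Δx)(1/CFL + CFL) + 1/ε) ≤ 2; i.e. the leftmost point
λ = −(lmax/(2Δx))(1/CFL + CFL) − 1/ε − (lmax/(2Δx))(1/CFL + CFL) of the FORCE fast
cluster satisfies |1 + Δt·λ| ≤ 1. -/
theorem stmt9 (lmax Δx ε CFL Δt : ℝ) (hl : 0 < lmax) (hΔx : 0 < Δx) (hε : 0 < ε)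
    (hCFL0 : 0 < CFL)
    (hCFL : CFL ≤ -(Δx / (2 * ε * lmax)) + Real.sqrt ((Δx / (2 * ε * lmax)) ^ 2 + 1))
    (hΔt : Δt = CFL * Δx / lmax) :
    Δt * ((lmax / Δx) * (1 / CFL + CFL) + 1 / ε) ≤ 2 ∧
      |1 + Δt * (-(lmax / (2 * Δx)) * (1 / CFL + CFL) - 1 / ε
        - (lmax / (2 * Δx)) * (1 / CFL + CFL))| ≤ 1 := by
  set a : ℝ := Δx / (2 * ε * lmax) with ha
  have ha0 : 0 < a := by positivity
  have hsq : Real.sqrt (a ^ 2 + 1) ^ 2 = a ^ 2 + 1 :=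
    Real.sq_sqrt (by positivity)
  have hsn : 0 ≤ Real.sqrt (a ^ 2 + 1) := Real.sqrt_nonneg _
  have h2 : CFL ^ 2 + 2 * a * CFL ≤ 1 := by nlinarith
  have hE : Δt * ((lmax / Δx) * (1 / CFL + CFL) + 1 / ε)
      = 1 + CFL ^ 2 + 2 * a * CFL := by
    rw [hΔt, ha]
    field_simp
  have hE2 : Δt * ((lmax / Δx) * (1 / CFL + CFL) + 1 / ε) ≤ 2 := by
    rw [hE]; linarith
  have hE0 : 0 ≤ Δt * ((lmax / Δx) * (1 / CFL + CFL) + 1 / ε) := by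
    rw [hE]; nlinarith
  refine ⟨hE2, ?_⟩
  have key : 1 + Δt * (-(lmax / (2 * Δx)) * (1 / CFL + CFL) - 1 / ε
        - (lmax / (2 * Δx)) * (1 / CFL + CFL))
      = 1 - Δt * ((lmax / Δx) * (1 / CFL + CFL) + 1 / ε) := by
    field_simp
    ring
  rw [key, abs_le]
  constructor <;> linarith
end

section
/- PFE fast-cluster stability: let δt, Δt > 0 with δt ≤ Δt and K = 1. For real λ satisfying |1 + δt·λ| ≤ δt/Δt, one has |(1 + (Δt − δt)·λ)·(1 + δt·λ)| ≤ 1. -/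
/-- PFE fast-cluster stability, K = 1: for 0 < δt ≤ Δt and real λ with
|1 + δt·λ| ≤ δt/Δt, the PFE amplification factor satisfies
|(1 + (Δt − δt)·λ)·(1 + δt·λ)| ≤ 1. -/
theorem stmt11 (δt Δt lam : ℝ) (hδt : 0 < δt) (hΔt : 0 < Δt) (hle : δt ≤ Δt)
    (hlam : |1 + δt * lam| ≤ δt / Δt) :
    |(1 + (Δt - δt) * lam) * (1 + δt * lam)| ≤ 1 := by
  rw [abs_le] at hlam ⊢
  obtain ⟨h1, h2⟩ := hlam
  have h1' : 0 ≤ δt + Δt * (1 + δt * lam) := by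
    have := mul_le_mul_of_nonneg_left h1 hΔt.le
    rw [mul_neg, mul_div_cancel₀ _ hΔt.ne'] at this; linarith
  have h2' : 0 ≤ δt - Δt * (1 + δt * lam) := by
    have := mul_le_mul_of_nonneg_left h2 hΔt.le
    rw [mul_div_cancel₀ _ hΔt.ne'] at this; linarith
  have hd : 0 ≤ Δt - δt := by linarith
  have key := mul_nonneg h1' h2'
  have hpos : 0 < δt * Δt ^ 2 := by positivity
  have hub : δt * Δt ^ 2 * ((1 + (Δt - δt) * lam) * (1 + δt * lam)) ≤ δt * Δt ^ 2 := by
    rcases le_total (2 * δt) Δt with hc | hc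
    · nlinarith [mul_nonneg hd key,
        mul_nonneg (by linarith : (0:ℝ) ≤ Δt - 2*δt) (mul_nonneg hΔt.le h1'),
        mul_nonneg (mul_nonneg hδt.le hδt.le) hΔt.le, mul_nonneg hδt.le (mul_nonneg hδt.le hδt.le)]
    · nlinarith [mul_nonneg hd key,
        mul_nonneg (by linarith : (0:ℝ) ≤ 2*δt - Δt) (mul_nonneg hΔt.le h2'),
        mul_nonneg (mul_nonneg hd hd) hδt.le,
        mul_nonneg (mul_nonneg hd hd) hΔt.le,
        mul_nonneg (mul_nonneg hδt.le hδt.le) hΔt.le]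
  have hlb : -(δt * Δt ^ 2) ≤ δt * Δt ^ 2 * ((1 + (Δt - δt) * lam) * (1 + δt * lam)) := by
    rcases le_total (2 * δt) Δt with hc | hc
    · nlinarith [mul_nonneg hd (sq_nonneg (δt + Δt * (1 + δt * lam))),
        mul_nonneg hd (sq_nonneg (Δt * (1 + δt * lam))),
        mul_nonneg (by linarith : (0:ℝ) ≤ Δt - 2*δt) (mul_nonneg hΔt.le h2'),
        mul_nonneg (mul_nonneg hδt.le hδt.le) hΔt.le]
    · nlinarith [mul_nonneg hd (sq_nonneg (Δt * (1 + δt * lam))),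
        mul_nonneg (by linarith : (0:ℝ) ≤ 2*δt - Δt) (mul_nonneg hΔt.le h1'),
        mul_nonneg (mul_nonneg hδt.le hδt.le) hΔt.le]
  constructor
  · nlinarith [hlb, hpos]
  · nlinarith [hub, hpos]
end

section
/- AFE transition matrix (case K = 1, Δt = 2δt): applying Forward Euler with step δt twice in the left block (with interpolated right-block boundary values W_R^{n,k} = W_R^n + (k+1)δt(A_{RL}W_L^n + A_{RR}W_R^n)) and one Forward Euler step of size Δt in the right block yields the exact transition matrix T = I + Δt·𝓐 + (Δt²/4)·[[A_{LL}² + A_{LR}A_{RL}, A_{LL}A_{LR} + A_{LR}A_{RR}], [0, 0]], where 𝓐 = [[A_{LL}, A_{LR}],[A_{RL}, A_{RR}]]. -/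
/-- AFE transition matrix, K = 1, Δt = 2δt: applying Forward Euler with
step δt twice in the left block (with interpolated right-block boundary values
W_R^{n,k} = W_R^n + (k+1)δt(A_RL W_L^n + A_RR W_R^n)) and one Forward Euler step of
size Δt in the right block realizes exactly the transition matrix
T = I + Δt·𝓐 + (Δt²/4)·[[A_LL² + A_LR A_RL, A_LL A_LR + A_LR A_RR], [0, 0]]. -/
theorem stmt13 {n m : ℕ}
    (ALL : Matrix (Fin n) (Fin n) ℝ) (ALR : Matrix (Fin n) (Fin m) ℝ)
    (ARL : Matrix (Fin m) (Fin n) ℝ) (ARR : Matrix (Fin m) (Fin m) ℝ)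
    (δt Δt : ℝ) (hδt : 0 < δt) (hΔt : Δt = 2 * δt)
    (WL : Fin n → ℝ) (WR : Fin m → ℝ)
    (WL1 WR1 WL2 WRnew : _)
    (hWL1 : WL1 = WL + δt • (ALL.mulVec WL + ALR.mulVec WR))
    (hWR1 : WR1 = WR + δt • (ARL.mulVec WL + ARR.mulVec WR))
    (hWL2 : WL2 = WL1 + δt • (ALL.mulVec WL1 + ALR.mulVec WR1))
    (hWRnew : WRnew = WR + Δt • (ARL.mulVec WL + ARR.mulVec WR))
    (T : Matrix (Fin n ⊕ Fin m) (Fin n ⊕ Fin m) ℝ)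
    (hT : T = 1 + Δt • Matrix.fromBlocks ALL ALR ARL ARR +
      (Δt ^ 2 / 4) • Matrix.fromBlocks (ALL * ALL + ALR * ARL)
        (ALL * ALR + ALR * ARR) 0 0) :
    T.mulVec (Sum.elim WL WR) = Sum.elim WL2 WRnew := by
  subst hWL1 hWR1 hWL2 hWRnew hT hΔt
  funext x
  cases x <;>
    simp [Matrix.add_mulVec, Matrix.smul_mulVec, Matrix.one_mulVec,
      Matrix.fromBlocks_mulVec, Matrix.mulVec_add, Matrix.mulVec_smul,
      ← Matrix.mulVec_mulVec, Matrix.zero_mulVec, Pi.add_apply, Pi.smul_apply,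
      smul_eq_mul] <;> ring
end

section
/- First-order consistency of AFE (K = 1): with T^{AFE} = I + Δt·𝓐 + (Δt²/4)·B (B the block matrix with top row (A_{LL}² + A_{LR}A_{RL}, A_{LL}A_{LR} + A_{LR}A_{RR}) and zero bottom row), the local error against the exact propagator satisfies ‖T^{AFE} − exp(Δt·𝓐)‖ ≤ C·Δt² for a constant C depending only on ‖𝓐‖, for all sufficiently small Δt > 0. Hence AFE is first-order accurate in time. -/
/-!
Through first order, `T Δt` agrees with the exponential series `1 + Δt • 𝓐 + ⋯`. Since `exp` is
analytic at `0`, Taylor's formula gives `exp x - 1 - x = O(‖x‖²)`, so along `x = Δt • 𝓐` the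
exponential's remainder is `O(Δt²)`; the AFE correction is `Δt² / 4` times a fixed matrix, which
is `O(Δt²)` as well.
-/

open Filter Topology Asymptotics NormedSpace

section BanachAlgebra

variable {𝔸 : Type*} [NormedRing 𝔸] [NormedAlgebra ℝ 𝔸] [CompleteSpace 𝔸]

theorem exp_sub_one_sub_isBigO :
    (fun x : 𝔸 => exp x - 1 - x) =O[𝓝 0] fun x => ‖x‖ ^ 2 := by
  have h := (hasFPowerSeriesAt_exp_zero_of_radius_pos (𝕂 := ℝ) (𝔸 := 𝔸)
    (expSeries_radius_pos ℝ 𝔸)).isBigO_sub_partialSum_pow 2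
  simpa [FormalMultilinearSeries.partialSum, Finset.sum_range_succ, expSeries_apply_eq,
    sub_sub] using h

theorem exp_smul_sub_one_sub_smul_isBigO (a : 𝔸) :
    (fun t : ℝ => exp (t • a) - 1 - t • a) =O[𝓝 0] fun t => t ^ 2 := by
  have hlim : Tendsto (fun t : ℝ => t • a) (𝓝 0) (𝓝 0) := by
    simpa using (tendsto_id (x := 𝓝 (0 : ℝ))).smul_const a
  refine (exp_sub_one_sub_isBigO.comp_tendsto hlim).trans ?_
  refine isBigO_iff.2 ⟨‖a‖ ^ 2, Eventually.of_forall fun t => ?_⟩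
  simp [norm_smul, mul_pow, mul_comm]

theorem one_add_smul_add_sub_exp_smul_isBigO (a : 𝔸) {g : ℝ → 𝔸}
    (hg : g =O[𝓝 0] fun t => t ^ 2) :
    (fun t : ℝ => 1 + t • a + g t - exp (t • a)) =O[𝓝 0] fun t => t ^ 2 := by
  refine (hg.sub (exp_smul_sub_one_sub_smul_isBigO a)).congr_left fun t => ?_
  abel

end BanachAlgebra

theorem exists_forall_norm_le_mul_sq_of_isBigO {E : Type*} [SeminormedAddCommGroup E]
    {f : ℝ → E} (hf : f =O[𝓝 0] fun t => t ^ 2) :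
    ∃ C > (0 : ℝ), ∃ δ > (0 : ℝ), ∀ t : ℝ, 0 < t → t ≤ δ → ‖f t‖ ≤ C * t ^ 2 := by
  obtain ⟨C, hC, hCf⟩ := hf.exists_pos
  obtain ⟨ε, hε, hball⟩ := Metric.eventually_nhds_iff.1 hCf.bound
  refine ⟨C, hC, ε / 2, by positivity, fun t ht htδ => ?_⟩
  have hdist : dist t 0 < ε := by
    rw [Real.dist_0_eq_abs, abs_of_pos ht]; linarith
  simpa using hball hdist

theorem stmt14_general {n m : ℕ}
    (ALL : Matrix (Fin n) (Fin n) ℝ) (ALR : Matrix (Fin n) (Fin m) ℝ)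
    (ARL : Matrix (Fin m) (Fin n) ℝ) (ARR : Matrix (Fin m) (Fin m) ℝ)
    (𝓐 : Matrix (Fin n ⊕ Fin m) (Fin n ⊕ Fin m) ℝ)
    (T : ℝ → Matrix (Fin n ⊕ Fin m) (Fin n ⊕ Fin m) ℝ)
    (hT : ∀ Δt : ℝ, T Δt = 1 + Δt • 𝓐 +
      (Δt ^ 2 / 4) • Matrix.fromBlocks (ALL * ALL + ALR * ARL)
        (ALL * ALR + ALR * ARR) 0 0) :
    ∃ C > (0 : ℝ), ∃ δ > (0 : ℝ), ∀ Δt : ℝ, 0 < Δt → Δt ≤ δ →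
      ‖Matrix.toEuclideanCLM (𝕜 := ℝ) (T Δt) -
        NormedSpace.exp (Matrix.toEuclideanCLM (𝕜 := ℝ) (Δt • 𝓐))‖ ≤ C * Δt ^ 2 := by
  set B := Matrix.toEuclideanCLM (𝕜 := ℝ) (Matrix.fromBlocks (ALL * ALL + ALR * ARL)
    (ALL * ALR + ALR * ARR) 0 0)
  have hcorr : (fun t : ℝ => (t ^ 2 / 4) • B) =O[𝓝 0] fun t => t ^ 2 :=
    isBigO_iff.2 ⟨‖B‖ / 4, Eventually.of_forall fun t => by simp [norm_smul]; linarith⟩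
  obtain ⟨C, hC, δ, hδ, hbound⟩ := exists_forall_norm_le_mul_sq_of_isBigO
    (one_add_smul_add_sub_exp_smul_isBigO (Matrix.toEuclideanCLM (𝕜 := ℝ) 𝓐) hcorr)
  refine ⟨C, hC, δ, hδ, fun t ht htδ => ?_⟩
  simpa only [hT, map_add, map_one, map_smul] using hbound t ht htδ

/-- first-order consistency of AFE, K = 1: the AFE transition matrix
T^{AFE}(Δt) = I + Δt·𝓐 + (Δt²/4)·B (with B the block matrix with top row
(A_LL² + A_LR A_RL, A_LL A_LR + A_LR A_RR) and zero bottom row) satisfies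
‖T^{AFE}(Δt) − exp(Δt·𝓐)‖ ≤ C·Δt² in operator norm, for a constant C > 0 and all
sufficiently small Δt > 0; hence AFE is first-order accurate in time. -/
theorem stmt14 {n m : ℕ}
    (ALL : Matrix (Fin n) (Fin n) ℝ) (ALR : Matrix (Fin n) (Fin m) ℝ)
    (ARL : Matrix (Fin m) (Fin n) ℝ) (ARR : Matrix (Fin m) (Fin m) ℝ)
    (𝓐 : Matrix (Fin n ⊕ Fin m) (Fin n ⊕ Fin m) ℝ)
    (h𝓐 : 𝓐 = Matrix.fromBlocks ALL ALR ARL ARR)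
    (T : ℝ → Matrix (Fin n ⊕ Fin m) (Fin n ⊕ Fin m) ℝ)
    (hT : ∀ Δt : ℝ, T Δt = 1 + Δt • 𝓐 +
      (Δt ^ 2 / 4) • Matrix.fromBlocks (ALL * ALL + ALR * ARL)
        (ALL * ALR + ALR * ARR) 0 0) :
    ∃ C > (0 : ℝ), ∃ δ > (0 : ℝ), ∀ Δt : ℝ, 0 < Δt → Δt ≤ δ →
      ‖Matrix.toEuclideanCLM (𝕜 := ℝ) (T Δt) -
        NormedSpace.exp (Matrix.toEuclideanCLM (𝕜 := ℝ) (Δt • 𝓐))‖ ≤ C * Δt ^ 2 :=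
  stmt14_general ALL ALR ARL ARR 𝓐 T hT
end
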